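/- Let (𝓜, 𝓒) be a perfect duality pair over a commutative ring R. Then 𝓜 contains all projective R-modules, and in fact 𝓜 contains all flat R-modules; moreover, the class 𝓒 contains all injective R-modules. -/

import Mathlib

open CategoryTheory

universe w u

/-- The character module `M⁺ = Hom_ℤ(M, ℚ/ℤ)` of `M`, as an object of `ModuleCat R`
(with the `R`-action `(r • f) x = f (r • x)`). -/
noncomputable def charMod (R : Type u) [CommRing R] (M : ModuleCat.{u} R) : ModuleCat.{u} R :=
  ModuleCat.of R (CharacterModule M)

/-- `(𝓜, 𝓒)` is a duality pair over `R`: both classes are closed under isomorphism,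
`M ∈ 𝓜 ↔ M⁺ ∈ 𝓒`, and `𝓒` is closed under direct summands and finite direct sums. -/
structure IsDualityPair (R : Type u) [CommRing R]
    (Mc Cc : ModuleCat.{u} R → Prop) : Prop where
  isoClosed_fst : ∀ {A B : ModuleCat.{u} R}, (A ≅ B) → Mc A → Mc B
  isoClosed_snd : ∀ {A B : ModuleCat.{u} R}, (A ≅ B) → Cc A → Cc B
  char_mem_iff : ∀ M : ModuleCat.{u} R, Mc M ↔ Cc (charMod R M)
  summand_closed : ∀ A B : ModuleCat.{u} R, Cc (ModuleCat.of R (A × B)) → Cc A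
  finSum_closed : ∀ A B : ModuleCat.{u} R, Cc A → Cc B → Cc (ModuleCat.of R (A × B))

/-- A duality pair `(𝓜, 𝓒)` is perfect if `R ∈ 𝓜` and `𝓜` is closed under arbitrary
direct sums and under extensions. -/
structure IsPerfectDualityPair (R : Type u) [CommRing R]
    (Mc Cc : ModuleCat.{u} R → Prop) extends IsDualityPair R Mc Cc : Prop where
  self_mem : Mc (ModuleCat.of R R)
  directSum_closed : ∀ (ι : Type u) (A : ι → ModuleCat.{u} R),
    (∀ i, Mc (A i)) → Mc (ModuleCat.of R (DirectSum ι (fun i => A i)))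
  extension_closed : ∀ S : ShortComplex (ModuleCat.{u} R),
    S.ShortExact → Mc S.X₁ → Mc S.X₃ → Mc S.X₂

/-!
Direct sums of copies of `R` lie in `𝓜`, so the character modules of free modules lie in `𝓒`.
Every module `M` embeds into `M⁺⁺`, hence into `(R^(M⁺))⁺` by dualising a free presentation
`R^(M⁺) ↠ M⁺`; an injective module is therefore a direct summand of a module in `𝓒`, so it
lies in `𝓒`. A flat module `F` has injective character module `F⁺ ∈ 𝓒`, so `F ∈ 𝓜`, and
projective modules are flat.
-/

variable {R : Type u} [CommRing R]

namespace CharacterModule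

noncomputable def eval (M : Type*) [AddCommGroup M] [Module R M] :
    M →ₗ[R] CharacterModule (CharacterModule M) where
  toFun a :=
    { toFun := fun c => c a
      map_zero' := rfl
      map_add' := fun _ _ => rfl }
  map_add' a b := by ext c; exact map_add c a b
  map_smul' _ _ := by ext; rfl

lemma eval_injective (M : Type*) [AddCommGroup M] [Module R M] :
    Function.Injective (eval (R := R) M) := by
  intro a b hab
  rw [← sub_eq_zero]
  refine eq_zero_of_character_apply fun c => ?_
  rw [map_sub, sub_eq_zero]
  exact congr(($hab) c)

lemma exists_mono_charMod_free (M : ModuleCat.{u} R) :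
    ∃ (ι : Type u) (f : M ⟶ charMod R (ModuleCat.of R (ι →₀ R))), Mono f := by
  let p : (CharacterModule M →₀ R) →ₗ[R] CharacterModule M := Finsupp.linearCombination R id
  have hp : Function.Surjective p :=
    Finsupp.linearCombination_surjective R Function.surjective_id
  refine ⟨CharacterModule M, ModuleCat.ofHom (dual p ∘ₗ eval M), ?_⟩
  exact (ModuleCat.mono_iff_injective _).mpr <|
    (dual_injective_of_surjective p hp).comp (eval_injective M)

end CharacterModule

noncomputable def LinearEquiv.prodKerOfLeftInverse {A B : Type*} [AddCommGroup A] [Module R A]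
    [AddCommGroup B] [Module R B] (f : A →ₗ[R] B) (r : B →ₗ[R] A)
    (h : Function.LeftInverse r f) : B ≃ₗ[R] A × LinearMap.ker r where
  toFun b := (r b, ⟨b - f (r b), by simp [LinearMap.mem_ker, h (r b)]⟩)
  invFun p := f p.1 + p.2.1
  left_inv b := by simp
  right_inv p := by ext <;> simp [h p.1, LinearMap.mem_ker.mp p.2.2]
  map_add' x y := by
    ext <;> simp only [map_add, Prod.fst_add, Prod.snd_add, Submodule.coe_add]; abel
  map_smul' c x := by ext <;> simp [smul_sub]

namespace IsDualityPair

variable {Mc Cc : ModuleCat.{u} R → Prop}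

lemma snd_of_retract (hp : IsDualityPair R Mc Cc) {A B : ModuleCat.{u} R} (e : Retract A B)
    (hB : Cc B) : Cc A := by
  have hr : Function.LeftInverse e.r.hom e.i.hom := fun x => congr(($e.retract) x)
  have hprod := hp.isoClosed_snd (LinearEquiv.prodKerOfLeftInverse _ _ hr).toModuleIso hB
  exact hp.summand_closed A (ModuleCat.of R (LinearMap.ker e.r.hom)) hprod

end IsDualityPair

namespace IsPerfectDualityPair

variable {Mc Cc : ModuleCat.{u} R → Prop}

lemma free_mem (h : IsPerfectDualityPair R Mc Cc) (ι : Type u) :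
    Mc (ModuleCat.of R (ι →₀ R)) := by
  classical
  exact h.isoClosed_fst (finsuppLEquivDirectSum R R ι).symm.toModuleIso
    (h.directSum_closed ι (fun _ => ModuleCat.of R R) fun _ => h.self_mem)

lemma injective_mem (h : IsPerfectDualityPair R Mc Cc) (I : ModuleCat.{u} R)
    [Injective I] : Cc I := by
  obtain ⟨ι, f, _⟩ := CharacterModule.exists_mono_charMod_free I
  exact h.snd_of_retract ⟨f, Injective.factorThru (𝟙 I) f, Injective.comp_factorThru _ _⟩
    ((h.char_mem_iff _).mp (h.free_mem ι))

lemma flat_mem (h : IsPerfectDualityPair R Mc Cc) (F : ModuleCat.{u} R)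
    [Module.Flat R F] : Mc F := by
  have : Module.Injective R (CharacterModule F) :=
    Module.Flat.iff_characterModule_injective.mp inferInstance
  have : Injective (charMod R F) := Module.injective_object_of_injective_module R _
  exact (h.char_mem_iff F).mpr (h.injective_mem _)

lemma projective_mem (h : IsPerfectDualityPair R Mc Cc) (P : ModuleCat.{u} R)
    [Projective P] : Mc P := by
  have : Module.Projective R P := (IsProjective.iff_projective P).mpr inferInstance
  exact h.flat_mem P

end IsPerfectDualityPair

theorem perfect_duality_pair_contains_proj_flat_inj
    (R : Type u) [CommRing R] (Mc Cc : ModuleCat.{u} R → Prop)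
    (h : IsPerfectDualityPair R Mc Cc) :
    (∀ P : ModuleCat.{u} R, Projective P → Mc P) ∧
    (∀ F : ModuleCat.{u} R, Module.Flat R F → Mc F) ∧
    (∀ I : ModuleCat.{u} R, Injective I → Cc I) :=
  ⟨fun P _ => h.projective_mem P, fun F _ => h.flat_mem F, fun I _ => h.injective_mem I⟩
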